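/- arXiv:2104.11807 — 5 statements merged into one kernel-verified Lean document; each statement's English description precedes it below -/
import Mathlib

section
/- Let H₁, H₂ be real Hilbert spaces and J : H₁ → H₂ a bounded linear operator that is injective, has dense range, and satisfies ‖J x‖₂ ≤ ‖x‖₁ for all x ∈ H₁. Suppose (u_i)_{i∈ℕ} is a Hilbert (orthonormal) basis of H₂ consisting of eigenvectors of B := J J*, with J J* u_i = λ_i u_i and λ_i > 0 for all i. Then the family (λ_i^{-1/2} J* u_i)_{i∈ℕ} is a Hilbert basis of H₁, and for all x, y ∈ H₁ the series ∑_{i∈ℕ} λ_i⁻¹ ⟨J x, u_i⟩ ⟨u_i, J y⟩ converges and equals ⟨x, y⟩_{H₁}. In particular ‖x‖²_{H₁} = ∑_i λ_i⁻¹ |⟨J x, u_i⟩|². -/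
open RealInnerProductSpace

/-- Let `J : H₁ → H₂` be bounded, injective, with dense range and
`‖J x‖ ≤ ‖x‖`. If `(u i)` is a Hilbert basis of `H₂` consisting of eigenvectors of
`B = J J*` with eigenvalues `λ i > 0`, then `(λ i ^ (-1/2) • J* (u i))` is a Hilbert basis
of `H₁`, and for all `x y ∈ H₁` the series `∑ i, (λ i)⁻¹ ⟪J x, u i⟫ ⟪u i, J y⟫` converges
to `⟪x, y⟫₁`; in particular `‖x‖² = ∑ i, (λ i)⁻¹ ⟪J x, u i⟫²`. -/
theorem stmt6 {H₁ H₂ : Type*}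
    [NormedAddCommGroup H₁] [InnerProductSpace ℝ H₁] [CompleteSpace H₁]
    [NormedAddCommGroup H₂] [InnerProductSpace ℝ H₂] [CompleteSpace H₂]
    (J : H₁ →L[ℝ] H₂) (hinj : Function.Injective J)
    (hdense : Dense (Set.range J : Set H₂))
    (hnorm : ∀ x : H₁, ‖J x‖ ≤ ‖x‖)
    (u : HilbertBasis ℕ ℝ H₂) (lam : ℕ → ℝ) (hpos : ∀ i, 0 < lam i)
    (heig : ∀ i, J (J.adjoint (u i)) = lam i • u i) :
    (∃ b : HilbertBasis ℕ ℝ H₁,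
      ∀ i, (b i : H₁) = (Real.sqrt (lam i))⁻¹ • J.adjoint (u i)) ∧
    (∀ x y : H₁, HasSum (fun i => (lam i)⁻¹ * (⟪J x, u i⟫ * ⟪u i, J y⟫)) ⟪x, y⟫) ∧
    (∀ x : H₁, HasSum (fun i => (lam i)⁻¹ * ⟪J x, u i⟫ ^ 2) (‖x‖ ^ 2)) := by
  set v : ℕ → H₁ := fun i => (Real.sqrt (lam i))⁻¹ • J.adjoint (u i) with hv
  have hsqrt : ∀ i, Real.sqrt (lam i) ≠ 0 := fun i =>
    ne_of_gt (Real.sqrt_pos.mpr (hpos i))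
  have hadj : ∀ i j, ⟪J.adjoint (u i), J.adjoint (u j)⟫ = lam j * ⟪(u i : H₂), u j⟫ := by
    intro i j
    rw [ContinuousLinearMap.adjoint_inner_left, heig j, real_inner_smul_right]
  have horth : Orthonormal ℝ v := by
    rw [orthonormal_iff_ite]
    intro i j
    simp only [hv, real_inner_smul_left, real_inner_smul_right, hadj,
      orthonormal_iff_ite.mp u.orthonormal i j]
    by_cases h : i = j
    · subst h
      rw [if_pos rfl, mul_one, ← mul_assoc, ← mul_inv,
        Real.mul_self_sqrt (hpos i).le, inv_mul_cancel₀ (hpos i).ne']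
    · simp [h]
  have hbot : (Submodule.span ℝ (Set.range v))ᗮ = ⊥ := by
    rw [Submodule.eq_bot_iff]
    intro x hx
    have hx' : ∀ i, ⟪J x, (u i : H₂)⟫ = 0 := by
      intro i
      have := hx (v i) (Submodule.subset_span ⟨i, rfl⟩)
      -- ⟪v i, x⟫ = 0
      rw [hv] at this
      simp only [real_inner_smul_left] at this
      have h2 : ⟪J.adjoint (u i), x⟫ = 0 := by
        rcases mul_eq_zero.mp this with h | h
        · exact absurd h (inv_ne_zero (hsqrt i))
        · exact h
      rw [ContinuousLinearMap.adjoint_inner_left] at h2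
      rw [real_inner_comm]
      exact h2
    have hJx : J x = 0 := by
      have := u.hasSum_inner_mul_inner (J x) (J x)
      simp only [hx', zero_mul] at this
      have h0 : ⟪J x, J x⟫ = 0 := this.unique hasSum_zero
      exact inner_self_eq_zero.mp h0
    exact hinj (by rw [hJx, map_zero])
  refine ⟨⟨HilbertBasis.mkOfOrthogonalEqBot horth hbot, fun i => by
    rw [HilbertBasis.coe_mkOfOrthogonalEqBot]⟩, ?_, ?_⟩
  · intro x y
    have hb := (HilbertBasis.mkOfOrthogonalEqBot horth hbot).hasSum_inner_mul_inner x y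
    rw [show ⟪x, y⟫ = ⟪x, y⟫ from rfl] at hb
    convert hb using 2 with i
    · rfl
    rw [HilbertBasis.coe_mkOfOrthogonalEqBot, hv]
    simp only [real_inner_smul_left, real_inner_smul_right,
      ContinuousLinearMap.adjoint_inner_left, ContinuousLinearMap.adjoint_inner_right]
    have hs : (Real.sqrt (lam i))⁻¹ * (Real.sqrt (lam i))⁻¹ = (lam i)⁻¹ := by
      rw [← mul_inv, Real.mul_self_sqrt (hpos i).le]
    rw [← hs]; ring
  · intro x
    have hb := (HilbertBasis.mkOfOrthogonalEqBot horth hbot).hasSum_inner_mul_inner x x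
    rw [real_inner_self_eq_norm_sq] at hb
    convert hb using 2 with i
    · rfl
    rw [HilbertBasis.coe_mkOfOrthogonalEqBot, hv]
    simp only [real_inner_smul_left, real_inner_smul_right,
      ContinuousLinearMap.adjoint_inner_left, ContinuousLinearMap.adjoint_inner_right]
    have hs : (Real.sqrt (lam i))⁻¹ * (Real.sqrt (lam i))⁻¹ = (lam i)⁻¹ := by
      rw [← mul_inv, Real.mul_self_sqrt (hpos i).le]
    rw [real_inner_comm ((u : ℕ → H₂) i) (J x), ← hs]; ring
end

section
/- Let H be a real (or complex) Hilbert space and (P_j)_{j∈ℕ₀} a sequence of orthogonal projections onto closed subspaces of H. Suppose there exists a constant c with 0 < c < 1 such that ‖P_j (I − P_{j−1}) y‖² ≥ c ‖(I − P_{j−1}) y‖² for all y ∈ H and all j ≥ 1. Then for every x ∈ H and every n ≥ 1, ‖(I − P_n)(I − P_{n−1}) ⋯ (I − P_0) x‖² ≤ (1 − c)ⁿ ‖(I − P_0) x‖²; consequently the operators T_n := (I − P_n)(I − P_{n−1}) ⋯ (I − P_0) converge to 0 in the strong operator topology, i.e. the system (P_j) is effective. -/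
open RealInnerProductSpace Filter

/-- If `(P j)` is a sequence of orthogonal projections (self-adjoint
idempotents) in a real Hilbert space and there is `0 < c < 1` with
`‖P j ((I - P (j-1)) y)‖² ≥ c ‖(I - P (j-1)) y‖²` for all `y` and `j ≥ 1`, then the
products `T n = (I - P n)⋯(I - P 0)` satisfy `‖T n x‖² ≤ (1 - c)ⁿ ‖(I - P 0) x‖²` and
converge strongly to `0`: the system is effective. -/
theorem stmt11 {H : Type*} [NormedAddCommGroup H] [InnerProductSpace ℝ H] [CompleteSpace H]
    (P : ℕ → H →L[ℝ] H)
    (hidem : ∀ j, ∀ x : H, P j (P j x) = P j x)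
    (hsa : ∀ j, ∀ x y : H, ⟪P j x, y⟫ = ⟪x, P j y⟫)
    (c : ℝ) (hc0 : 0 < c) (hc1 : c < 1)
    (hcontr : ∀ j : ℕ, 1 ≤ j → ∀ y : H,
      c * ‖y - P (j - 1) y‖ ^ 2 ≤ ‖P j (y - P (j - 1) y)‖ ^ 2)
    (T : ℕ → H → H) (hT0 : ∀ x, T 0 x = x - P 0 x)
    (hTS : ∀ n x, T (n + 1) x = T n x - P (n + 1) (T n x)) :
    (∀ (x : H) (n : ℕ), 1 ≤ n → ‖T n x‖ ^ 2 ≤ (1 - c) ^ n * ‖x - P 0 x‖ ^ 2) ∧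
    (∀ x : H, Tendsto (fun n => T n x) atTop (nhds 0)) := by
  -- Pythagoras: ‖y - P j y‖² = ‖y‖² - ‖P j y‖²
  have pyth : ∀ j (y : H), ‖y - P j y‖ ^ 2 = ‖y‖ ^ 2 - ‖P j y‖ ^ 2 := by
    intro j y
    have h1 : ⟪y, P j y⟫ = ‖P j y‖ ^ 2 := by
      have := hsa j (P j y) y
      rw [hidem] at this
      rw [real_inner_comm, this, real_inner_self_eq_norm_sq]
    rw [@norm_sub_sq_real, h1]
    ring
  -- key contraction: c ‖T n x‖² ≤ ‖P (n+1) (T n x)‖²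
  have key : ∀ n (x : H), c * ‖T n x‖ ^ 2 ≤ ‖P (n + 1) (T n x)‖ ^ 2 := by
    intro n x
    cases n with
    | zero =>
      have := hcontr 1 le_rfl x
      simpa [hT0 x] using this
    | succ m =>
      have := hcontr (m + 2) (by omega) (T m x)
      have h2 : (m + 2) - 1 = m + 1 := rfl
      rw [h2, ← hTS m x] at this
      exact this
  -- step: ‖T (n+1) x‖² ≤ (1 - c) * ‖T n x‖²
  have step : ∀ n (x : H), ‖T (n + 1) x‖ ^ 2 ≤ (1 - c) * ‖T n x‖ ^ 2 := by
    intro n x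
    rw [hTS n x, pyth]
    have := key n x
    nlinarith [key n x]
  have main : ∀ (x : H) (n : ℕ), ‖T n x‖ ^ 2 ≤ (1 - c) ^ n * ‖T 0 x‖ ^ 2 := by
    intro x n
    induction n with
    | zero => simp
    | succ m ih =>
      calc ‖T (m + 1) x‖ ^ 2 ≤ (1 - c) * ‖T m x‖ ^ 2 := step m x
        _ ≤ (1 - c) * ((1 - c) ^ m * ‖T 0 x‖ ^ 2) := by
            apply mul_le_mul_of_nonneg_left ih (by linarith)
        _ = (1 - c) ^ (m + 1) * ‖T 0 x‖ ^ 2 := by ring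
  constructor
  · intro x n _
    have := main x n
    rwa [hT0 x] at this
  · intro x
    have hsq : Tendsto (fun n => ‖T n x‖ ^ 2) atTop (nhds 0) := by
      have hgeo : Tendsto (fun n : ℕ => (1 - c) ^ n * ‖T 0 x‖ ^ 2) atTop (nhds 0) := by
        have : Tendsto (fun n : ℕ => (1 - c) ^ n) atTop (nhds 0) :=
          tendsto_pow_atTop_nhds_zero_of_lt_one (by linarith) (by linarith)
        simpa using this.mul_const (‖T 0 x‖ ^ 2)
      refine squeeze_zero (fun n => by positivity) (fun n => main x n) hgeo
    have hnorm : Tendsto (fun n => ‖T n x‖) atTop (nhds 0) := by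
      have := hsq.sqrt
      simpa [Real.sqrt_sq (norm_nonneg _)] using this
    exact tendsto_zero_iff_norm_tendsto_zero.mpr hnorm
end

section
/- Let H be a real (or complex) Hilbert space and (e_j)_{j∈ℕ₀} a sequence of unit vectors in H. Let P_j be the orthogonal (rank-one) projection onto the span of e_j, and define g_0 := e_0 and g_n := (I − P_0)(I − P_1) ⋯ (I − P_{n−1}) e_n for n ≥ 1. Then the system (P_j)_{j∈ℕ₀} is effective — i.e. (I − P_n)(I − P_{n−1})⋯(I − P_0) x → 0 for every x ∈ H — if and only if (g_n)_{n∈ℕ₀} is a Parseval frame for H, i.e. ‖x‖² = ∑_{n=0}^{∞} |⟨g_n, x⟩|² for every x ∈ H. -/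
open RealInnerProductSpace Filter

/-- Let `(e j)` be unit vectors in a real Hilbert space, `P j` the rank-one
projection onto `span {e j}`, `T n = (I - P n)⋯(I - P 0)` and
`g n = (I - P 0)(I - P 1)⋯(I - P (n-1)) (e n)` (with `g 0 = e 0`, encoded via the left
partial products `R n = (I - P 0)∘⋯∘(I - P (n-1))`, `g n = R n (e n)`). Then the system
`(P j)` is effective — `T n x → 0` for every `x` — iff `(g n)` is a Parseval frame:
`‖x‖² = ∑ₙ ⟪g n, x⟫²` for every `x`. -/
theorem stmt13 {H : Type*} [NormedAddCommGroup H] [InnerProductSpace ℝ H] [CompleteSpace H]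
    (e : ℕ → H) (he : ∀ j, ‖e j‖ = 1)
    (P : ℕ → H → H) (hP : ∀ j u, P j u = ⟪e j, u⟫ • e j)
    (T : ℕ → H → H) (hT0 : ∀ x, T 0 x = x - P 0 x)
    (hTS : ∀ n x, T (n + 1) x = T n x - P (n + 1) (T n x))
    (R : ℕ → H → H) (hR0 : ∀ u, R 0 u = u)
    (hRS : ∀ n u, R (n + 1) u = R n (u - P n u))
    (g : ℕ → H) (hg : ∀ n, g n = R n (e n)) :
    (∀ x : H, Tendsto (fun n => T n x) atTop (nhds 0)) ↔
      (∀ x : H, HasSum (fun n => ⟪g n, x⟫ ^ 2) (‖x‖ ^ 2)) := by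
  -- S n x = x if n = 0, T (n-1) x otherwise
  set S : ℕ → H → H := fun n => Nat.rec id (fun k _ => T k) n with hSdef
  have hS0 : ∀ x : H, S 0 x = x := fun x => rfl
  have hSsucc : ∀ (n : ℕ) (x : H), S (n + 1) x = T n x := fun n x => rfl
  have hSstep : ∀ (n : ℕ) (x : H), S (n + 1) x = S n x - P n (S n x) := by
    intro n x
    cases n with
    | zero => simpa [hSsucc, hS0] using hT0 x
    | succ k => simpa [hSsucc] using hTS k x
  have hPsa : ∀ (n : ℕ) (u v : H), ⟪P n u, v⟫ = ⟪u, P n v⟫ := by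
    intro n u v
    rw [hP, hP, real_inner_smul_left, real_inner_smul_right,
      real_inner_comm u (e n)]
    ring
  have hinner : ∀ (n : ℕ) (u x : H), ⟪R n u, x⟫ = ⟪u, S n x⟫ := by
    intro n
    induction n with
    | zero => intro u x; rw [hR0, hS0]
    | succ k ih =>
      intro u x
      rw [hRS, ih, hSstep, inner_sub_left, inner_sub_right, hPsa]
  have hg' : ∀ (n : ℕ) (x : H), ⟪g n, x⟫ = ⟪e n, S n x⟫ := fun n x => by
    rw [hg, hinner]
  have hnorm : ∀ (n : ℕ) (x : H),
      ‖S (n + 1) x‖ ^ 2 = ‖S n x‖ ^ 2 - ⟪e n, S n x⟫ ^ 2 := by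
    intro n x
    rw [hSstep, hP]
    rw [norm_sub_sq_real, inner_smul_right, norm_smul, real_inner_comm (S n x) (e n)]
    rw [mul_pow]
    simp [he n, Real.norm_eq_abs, sq_abs]
    ring
  have htel : ∀ (n : ℕ) (x : H),
      ∑ k ∈ Finset.range (n + 1), ⟪g k, x⟫ ^ 2 = ‖x‖ ^ 2 - ‖T n x‖ ^ 2 := by
    intro n x
    induction n with
    | zero =>
      have := hnorm 0 x
      rw [hSsucc, hS0] at this
      simp [hg' 0 x, hS0]
      linarith
    | succ k ih =>
      rw [Finset.sum_range_succ, ih, hg']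
      have := hnorm (k + 1) x
      rw [hSsucc, hSsucc] at this
      linarith
  constructor
  · intro h x
    rw [hasSum_iff_tendsto_nat_of_nonneg (fun n => sq_nonneg _)]
    have h1 : Tendsto (fun n => ‖T n x‖ ^ 2) atTop (nhds 0) := by
      simpa using ((h x).norm.pow 2)
    have h2 : Tendsto (fun n => ∑ k ∈ Finset.range (n + 1), ⟪g k, x⟫ ^ 2) atTop
        (nhds (‖x‖ ^ 2)) := by
      simp only [htel]
      simpa using Tendsto.const_sub (‖x‖ ^ 2) h1
    exact (tendsto_add_atTop_iff_nat 1).mp h2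
  · intro h x
    have hs := (hasSum_iff_tendsto_nat_of_nonneg (fun n => sq_nonneg _) _).mp (h x)
    have h2 : Tendsto (fun n => ∑ k ∈ Finset.range (n + 1), ⟪g k, x⟫ ^ 2) atTop
        (nhds (‖x‖ ^ 2)) := (tendsto_add_atTop_iff_nat 1).mpr hs
    have h3 : Tendsto (fun n => ‖T n x‖ ^ 2) atTop (nhds 0) := by
      have heq : (fun n => ‖T n x‖ ^ 2)
          = fun n => ‖x‖ ^ 2 - ∑ k ∈ Finset.range (n + 1), ⟪g k, x⟫ ^ 2 := by
        funext n; rw [htel]; ring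
      rw [heq]
      have h2' := Tendsto.const_sub (‖x‖ ^ 2) h2
      rw [sub_self] at h2'
      exact h2'
    have h4 : Tendsto (fun n => ‖T n x‖) atTop (nhds 0) := by
      have := h3.sqrt
      simpa [Real.sqrt_sq (norm_nonneg _)] using this
    exact tendsto_zero_iff_norm_tendsto_zero.mpr h4
end

section
/- Let H be a real (or complex) Hilbert space, 0 < c < 1, and (e_j)_{j∈ℕ₀} a sequence of unit vectors in H satisfying |⟨e_j, e_{j−1}⟩|² ≤ 1 − c for all j ≥ 1. Let Π_j denote the orthogonal rank-one projection onto span{e_j} and set P_j := I − Π_j (the projection onto the orthogonal complement of e_j). Then: (1) the system (P_j)_{j∈ℕ₀} is effective, i.e. the products (I − P_n)⋯(I − P_0) = Π_n Π_{n−1} ⋯ Π_0 converge strongly to 0; in fact ‖Π_n ⋯ Π_0 x‖ ≤ (1 − c)^{n/2} ‖x‖ for all x ∈ H and n ≥ 1; and (2) each operator Q_j := P_j (I − P_{j−1}) ⋯ (I − P_0) = (I − Π_j) Π_{j−1} ⋯ Π_0 has range contained in span{e_{j−1}, e_j}, hence rank(Q_j) ≤ 2. -/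
open RealInnerProductSpace Filter

/-- Let `(e j)` be unit vectors in a real Hilbert space with
`⟪e j, e (j-1)⟫² ≤ 1 - c` for all `j ≥ 1`, where `0 < c < 1`. Let `Π j` be the rank-one
projection onto `span {e j}` (so `Π j u = ⟪e j, u⟫ • e j`) and `P j := I - Π j`. Then
(1) the system `(P j)` is effective: the products `M n = Π n ⋯ Π 1 Π 0` satisfy
`‖M n x‖ ≤ √((1-c)ⁿ) ‖x‖` for `n ≥ 1` and converge strongly to `0`; and
(2) each `Q j = (I - Π j) Π (j-1) ⋯ Π 0` (for `j ≥ 1`) has range contained in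
`span {e (j-1), e j}`, hence rank at most 2. -/
theorem stmt15 {H : Type*} [NormedAddCommGroup H] [InnerProductSpace ℝ H] [CompleteSpace H]
    (c : ℝ) (hc0 : 0 < c) (hc1 : c < 1)
    (e : ℕ → H) (he : ∀ j, ‖e j‖ = 1)
    (hcorr : ∀ j : ℕ, 1 ≤ j → ⟪e j, e (j - 1)⟫ ^ 2 ≤ 1 - c)
    (Pi : ℕ → H → H) (hPi : ∀ j u, Pi j u = ⟪e j, u⟫ • e j)
    (M : ℕ → H → H) (hM0 : ∀ x, M 0 x = Pi 0 x)
    (hMS : ∀ n x, M (n + 1) x = Pi (n + 1) (M n x)) :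
    (∀ (x : H) (n : ℕ), 1 ≤ n → ‖M n x‖ ≤ Real.sqrt ((1 - c) ^ n) * ‖x‖) ∧
    (∀ x : H, Tendsto (fun n => M n x) atTop (nhds 0)) ∧
    (∀ j : ℕ, 1 ≤ j → ∀ x : H,
      M (j - 1) x - Pi j (M (j - 1) x) ∈
        Submodule.span ℝ ({e (j - 1), e j} : Set H)) := by
  have h1c : (0:ℝ) ≤ 1 - c := by linarith
  have hspan : ∀ n x, ∃ a : ℝ, M n x = a • e n := by
    intro n x
    cases n with
    | zero => exact ⟨⟪e 0, x⟫, by rw [hM0, hPi]⟩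
    | succ k => exact ⟨⟪e (k+1), M k x⟫, by rw [hMS, hPi]⟩
  have hinner : ∀ j : ℕ, 1 ≤ j → |⟪e j, e (j-1)⟫| ≤ Real.sqrt (1 - c) := by
    intro j hj
    have := hcorr j hj
    calc |⟪e j, e (j-1)⟫| = Real.sqrt (⟪e j, e (j-1)⟫ ^ 2) := by
          rw [Real.sqrt_sq_eq_abs]
      _ ≤ Real.sqrt (1 - c) := Real.sqrt_le_sqrt this
  have hstep : ∀ n x, ‖M (n+1) x‖ ≤ Real.sqrt (1-c) * ‖M n x‖ := by
    intro n x
    obtain ⟨a, ha⟩ := hspan n x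
    have hn1 : (n + 1 : ℕ) - 1 = n := rfl
    have hie := hinner (n+1) (Nat.le_add_left 1 n)
    rw [hn1] at hie
    rw [hMS, hPi, ha]
    rw [norm_smul, he (n+1), mul_one, inner_smul_right]
    rw [norm_smul, he n, mul_one]
    rw [Real.norm_eq_abs, Real.norm_eq_abs, abs_mul]
    calc |a| * |⟪e (n+1), e n⟫| ≤ |a| * Real.sqrt (1-c) :=
          mul_le_mul_of_nonneg_left hie (abs_nonneg a)
      _ = Real.sqrt (1-c) * |a| := mul_comm _ _
  have hbound : ∀ x : H, ∀ n : ℕ, ‖M n x‖ ≤ Real.sqrt (1-c) ^ n * ‖x‖ := by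
    intro x n
    induction n with
    | zero =>
      rw [hM0, hPi, norm_smul, he 0, mul_one, pow_zero, one_mul, Real.norm_eq_abs]
      exact (abs_real_inner_le_norm _ _).trans (by rw [he 0, one_mul])
    | succ k ih =>
      calc ‖M (k+1) x‖ ≤ Real.sqrt (1-c) * ‖M k x‖ := hstep k x
        _ ≤ Real.sqrt (1-c) * (Real.sqrt (1-c) ^ k * ‖x‖) :=
            mul_le_mul_of_nonneg_left ih (Real.sqrt_nonneg _)
        _ = Real.sqrt (1-c) ^ (k+1) * ‖x‖ := by ring
  refine ⟨?_, ?_, ?_⟩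
  · intro x n _
    have hsq : Real.sqrt ((1 - c) ^ n) = Real.sqrt (1 - c) ^ n := by
      rw [Real.sqrt_eq_iff_eq_sq (pow_nonneg h1c n) (pow_nonneg (Real.sqrt_nonneg _) n)]
      rw [← pow_mul, mul_comm, pow_mul, Real.sq_sqrt h1c]
    rw [hsq]
    exact hbound x n
  · intro x
    have hr0 : (0:ℝ) ≤ Real.sqrt (1-c) := Real.sqrt_nonneg _
    have hr1 : Real.sqrt (1-c) < 1 := by
      calc Real.sqrt (1-c) < Real.sqrt 1 := Real.sqrt_lt_sqrt h1c (by linarith)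
        _ = 1 := Real.sqrt_one
    have ht : Tendsto (fun n : ℕ => Real.sqrt (1-c) ^ n * ‖x‖) atTop (nhds 0) := by
      have := (tendsto_pow_atTop_nhds_zero_of_lt_one hr0 hr1).mul_const ‖x‖
      simpa using this
    rw [tendsto_zero_iff_norm_tendsto_zero]
    exact squeeze_zero (fun n => norm_nonneg _) (fun n => hbound x n) ht
  · intro j hj x
    obtain ⟨a, ha⟩ := hspan (j-1) x
    have h1 : e (j-1) ∈ Submodule.span ℝ ({e (j - 1), e j} : Set H) :=
      Submodule.subset_span (Or.inl rfl)
    have h2 : e j ∈ Submodule.span ℝ ({e (j - 1), e j} : Set H) :=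
      Submodule.subset_span (Or.inr rfl)
    rw [hPi, ha]
    exact Submodule.sub_mem _ (Submodule.smul_mem _ _ h1) (Submodule.smul_mem _ _ h2)
end

section
/- Let (Ω, 𝓕, ℙ) be a probability space and (Z_n)_{n∈ℕ₀} a sequence of real random variables in L²(Ω, ℙ) that is orthonormal, i.e. E[Z_n Z_m] = δ_{n,m} for all n, m. Let H be a real Hilbert space and (Q_n)_{n∈ℕ₀} a sequence of bounded linear operators on H satisfying the generalized Parseval identity ∑_{n∈ℕ₀} ⟨Q_n u, Q_n v⟩_H = ⟨u, v⟩_H for all u, v ∈ H. Then for every u ∈ H the series ∑_{n∈ℕ₀} Z_n(·) Q_n u converges in the Bochner space L²(Ω, ℙ; H) to an element W(u), and the resulting map satisfies E[⟨W(u), W(v)⟩_H] = ⟨u, v⟩_H for all u, v ∈ H; in particular E[‖W(u)‖²_H] = ‖u‖²_H. -/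
open MeasureTheory RealInnerProductSpace Filter

private lemma lp_coeFn_sum {α : Type*} [MeasurableSpace α] {μ : MeasureTheory.Measure α}
    {E : Type*} [NormedAddCommGroup E] {p : ENNReal} {ι : Type*}
    (s : Finset ι) (f : ι → MeasureTheory.Lp E p μ) :
    ⇑(∑ i ∈ s, f i) =ᵐ[μ] fun a => ∑ i ∈ s, (f i : α → E) a := by
  classical
  induction s using Finset.induction_on with
  | empty => simp only [Finset.sum_empty]; exact MeasureTheory.Lp.coeFn_zero E p μ
  | insert a s' h ih =>
    rw [Finset.sum_insert h]
    filter_upwards [MeasureTheory.Lp.coeFn_add (f a) (∑ i ∈ s', f i), ih] with ω h1 h2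
    rw [h1, Pi.add_apply, h2, Finset.sum_insert h]

/-- Let `(Z n)` be an orthonormal sequence of real random variables in
`L²(Ω, ℙ)` and `(Q n)` bounded operators on a real Hilbert space `H` satisfying the
generalized Parseval identity `∑ₙ ⟪Q n u, Q n v⟫ = ⟪u, v⟫`. Then for every `u ∈ H` the
series `∑ₙ Z n (·) • Q n u` converges in `L²(Ω, ℙ; H)` to an element `W u`, and
`E[⟪W u, W v⟫] = ⟪u, v⟫` for all `u, v`; in particular `E[‖W u‖²] = ‖u‖²`. -/
theorem stmt19 {Ω : Type*} [MeasurableSpace Ω] (ℙ : Measure Ω) [IsProbabilityMeasure ℙ]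
    (Z : ℕ → Ω → ℝ) (hZ : ∀ n, MemLp (Z n) 2 ℙ)
    (horth : ∀ n m : ℕ, ∫ ω, Z n ω * Z m ω ∂ℙ = if n = m then 1 else 0)
    {H : Type*} [NormedAddCommGroup H] [InnerProductSpace ℝ H] [CompleteSpace H]
    (Q : ℕ → H →L[ℝ] H)
    (hQ : ∀ u v : H, HasSum (fun n => ⟪Q n u, Q n v⟫) ⟪u, v⟫) :
    ∃ W : H → Ω → H,
      (∀ u : H, MemLp (W u) 2 ℙ) ∧
      (∀ u : H,
        Tendsto
          (fun N => eLpNorm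
            (fun ω => W u ω - ∑ n ∈ Finset.range N, Z n ω • Q n u) 2 ℙ)
          atTop (nhds 0)) ∧
      (∀ u v : H, ∫ ω, ⟪W u ω, W v ω⟫ ∂ℙ = ⟪u, v⟫) ∧
      (∀ u : H, ∫ ω, ‖W u ω‖ ^ 2 ∂ℙ = ‖u‖ ^ 2) := by
  -- membership of each summand in L²
  have hmem : ∀ (n : ℕ) (u : H), MemLp (fun ω => Z n ω • Q n u) 2 ℙ := fun n u =>
    (memLp_const (Q n u)).smul (hZ n) (p := 2) (q := ⊤) (r := 2)
  -- the summands as elements of L²(Ω; H)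
  set g : ℕ → H → Lp H 2 ℙ := fun n u => (hmem n u).toLp _ with hg
  -- integrability of products of the Z's
  have hZint : ∀ n m : ℕ, Integrable (fun ω => Z n ω * Z m ω) ℙ := by
    intro n m
    have := ((hZ n).smul (hZ m) (p := 2) (q := 2) (r := 1)) 
    simpa [smul_eq_mul, memLp_one_iff_integrable, mul_comm, Pi.mul_def] using this
  -- inner products of the summands
  have hinner : ∀ (n m : ℕ) (u v : H),
      ⟪g n u, g m v⟫ = (if n = m then 1 else 0) * ⟪Q n u, Q m v⟫ := by
    intro n m u v
    rw [L2.inner_def]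
    have h1 : ∫ ω, ⟪(g n u : Ω → H) ω, (g m v : Ω → H) ω⟫ ∂ℙ
        = ∫ ω, (Z n ω * Z m ω) * ⟪Q n u, Q m v⟫ ∂ℙ := by
      refine integral_congr_ae ?_
      filter_upwards [(hmem n u).coeFn_toLp, (hmem m v).coeFn_toLp] with ω h1 h2
      rw [hg]
      simp only [h1, h2, real_inner_smul_left, real_inner_smul_right]
      ring
    rw [h1, integral_mul_const, horth]
  -- summability of the squared norms
  have hsq : ∀ u : H, Summable (fun n => ‖Q n u‖ ^ 2) := by
    intro u
    have := (hQ u u).summable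
    refine this.congr fun n => ?_
    exact real_inner_self_eq_norm_sq _
  -- Pythagoras on finsets
  have hpyth : ∀ (u : H) (t : Finset ℕ),
      ‖∑ n ∈ t, g n u‖ ^ 2 = ∑ n ∈ t, ‖Q n u‖ ^ 2 := by
    intro u t
    rw [← real_inner_self_eq_norm_sq, sum_inner]
    rw [Finset.sum_congr rfl (fun n hn => inner_sum t (fun m => g m u) (g n u))]
    refine Finset.sum_congr rfl fun n hn => ?_
    have : ∀ m ∈ t, ⟪g n u, g m u⟫ = if m = n then ‖Q n u‖ ^ 2 else 0 := by
      intro m hm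
      rw [hinner]
      by_cases h : n = m
      · subst h; simp [real_inner_self_eq_norm_sq]
      · simp [h, Ne.symm h, fun hh : m = n => h hh.symm]
    rw [Finset.sum_congr rfl this, Finset.sum_ite_eq' t n _, if_pos hn]
  -- summability of the g's
  have hsummable : ∀ u : H, Summable (fun n => g n u) := by
    intro u
    rw [summable_iff_cauchySeq_finset]
    rw [cauchySeq_finset_iff_vanishing_norm]
    intro ε hε
    have hvan := summable_iff_vanishing.mp (hsq u) (Metric.ball 0 (ε ^ 2))
      (Metric.ball_mem_nhds 0 (by positivity))
    obtain ⟨s, hs⟩ := hvan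
    refine ⟨s, fun t ht => ?_⟩
    have h1 : ∑ n ∈ t, ‖Q n u‖ ^ 2 < ε ^ 2 := by
      have := hs t ht
      rw [Metric.mem_ball, Real.dist_eq, sub_zero] at this
      exact lt_of_le_of_lt (le_abs_self _) this
    have h2 : ‖∑ n ∈ t, g n u‖ ^ 2 < ε ^ 2 := by rw [hpyth]; exact h1
    exact lt_of_pow_lt_pow_left₀ 2 hε.le h2
  -- the limit in L²
  set W' : H → Lp H 2 ℙ := fun u => ∑' n, g n u with hW'
  have hhas : ∀ u : H, HasSum (fun n => g n u) (W' u) := fun u => (hsummable u).hasSum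
  -- identify inner products of the limits
  have hWinner : ∀ u v : H, ⟪W' u, W' v⟫ = ⟪u, v⟫ := by
    intro u v
    have step1 : ∀ n : ℕ, ⟪g n u, W' v⟫ = ⟪Q n u, Q n v⟫ := by
      intro n
      have h2 := (hhas v).mapL (innerSL ℝ (g n u))
      have h3 : HasSum (fun m => (innerSL ℝ (g n u)) (g m v)) ⟪Q n u, Q n v⟫ := by
        have : (fun m => (innerSL ℝ (g n u)) (g m v))
            = fun m => if m = n then ⟪Q n u, Q n v⟫ else 0 := by
          funext m
          simp only [innerSL_apply_apply, hinner]
          by_cases h : n = m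
          · subst h; simp
          · rw [if_neg h, zero_mul, if_neg (fun hh => h hh.symm)]
        rw [this]
        exact hasSum_ite_eq n _
      exact h2.unique h3
    have h4 := (hhas u).mapL ((innerSL ℝ (E := Lp H 2 ℙ)).flip (W' v))
    have h5 : HasSum (fun n => ⟪Q n u, Q n v⟫) ⟪W' u, W' v⟫ := by
      refine HasSum.congr_fun (by exact h4) fun n => ?_
      simp only [ContinuousLinearMap.flip_apply, innerSL_apply_apply]
      exact (step1 n).symm
    exact h5.unique (hQ u v)
  refine ⟨fun u => (W' u : Ω → H), fun u => Lp.memLp _, ?_, ?_, ?_⟩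
  · -- convergence of partial sums in eLpNorm
    intro u
    have htend : Tendsto (fun N => ∑ n ∈ Finset.range N, g n u) atTop (nhds (W' u)) :=
      (hhas u).tendsto_sum_nat
    have hnorm : Tendsto (fun N => ‖W' u - ∑ n ∈ Finset.range N, g n u‖) atTop (nhds 0) := by
      have := htend.sub (tendsto_const_nhds (x := W' u))
      rw [sub_self] at this
      have := this.norm
      simp only [norm_zero] at this
      refine this.congr fun N => ?_
      rw [← norm_neg, neg_sub]
    have key : ∀ N : ℕ,
        eLpNorm (fun ω => (W' u : Ω → H) ω - ∑ n ∈ Finset.range N, Z n ω • Q n u) 2 ℙ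
          = ENNReal.ofReal ‖W' u - ∑ n ∈ Finset.range N, g n u‖ := by
      intro N
      have hae : (fun ω => (W' u : Ω → H) ω - ∑ n ∈ Finset.range N, Z n ω • Q n u)
          =ᵐ[ℙ] (W' u - ∑ n ∈ Finset.range N, g n u : Lp H 2 ℙ) := by
        have hsum_ae : (∑ n ∈ Finset.range N, g n u : Lp H 2 ℙ)
            =ᵐ[ℙ] fun ω => ∑ n ∈ Finset.range N, Z n ω • Q n u := by
          have h1 := lp_coeFn_sum (Finset.range N) (fun n => g n u)
          have h2 : ∀ n ∈ Finset.range N, (g n u : Ω → H) =ᵐ[ℙ] fun ω => Z n ω • Q n u :=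
            fun n _ => (hmem n u).coeFn_toLp
          filter_upwards [h1, MeasureTheory.ae_ball_iff (Finset.countable_toSet _) |>.mpr h2]
            with ω hω h2ω
          rw [hω]
          exact Finset.sum_congr rfl fun n hn => h2ω n hn
        filter_upwards [Lp.coeFn_sub (W' u) (∑ n ∈ Finset.range N, g n u), hsum_ae]
          with ω h1 h2
        rw [h1, Pi.sub_apply, h2]
      rw [eLpNorm_congr_ae hae, Lp.norm_def,
        ENNReal.ofReal_toReal (Lp.eLpNorm_ne_top _)]
    simp only [key]
    have := (ENNReal.continuous_ofReal.tendsto 0).comp hnorm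
    simpa [Function.comp_def, ofReal_norm] using this
  · intro u v
    rw [← hWinner u v, L2.inner_def]
  · intro u
    have h1 : ∫ ω, ‖(W' u : Ω → H) ω‖ ^ 2 ∂ℙ = ∫ ω, ⟪(W' u : Ω → H) ω, (W' u : Ω → H) ω⟫ ∂ℙ := by
      refine integral_congr_ae (Eventually.of_forall fun ω => ?_)
      exact (real_inner_self_eq_norm_sq _).symm
    rw [h1, ← L2.inner_def, hWinner, real_inner_self_eq_norm_sq]
end
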